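/- Let A ≥ 0 be a real number, U(x) = 0 if x ≤ A and U(x) = 1 if x > A, and V(x) = x·1{x ≥ ⌊A⌋ + 2}. Let X_1, X_2 be independent Poisson random variables with means λ_1, λ_2 > 0, and S = U(X_1)λ_1 + U(X_2)λ_2. Suppose δ* : ℕ² → ℝ satisfies E_{λ_1,λ_2}[(δ*(X_1, X_2) − S)²] ≤ E_{λ_1,λ_2}[(V(X_1) + V(X_2) − S)²] for all λ_1, λ_2 > 0. Then in the limit λ_2 → 0 one obtains, for every λ_1 > 0, the one-dimensional risk inequality E_{λ_1}[(δ*(X_1, 0) − U(X_1)λ_1)²] ≤ E_{λ_1}[(V(X_1) − U(X_1)λ_1)²]. -/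

import Mathlib

/-- Poisson probability mass function with mean `λ`. -/
noncomputable def poissonPmf (l : ℝ) (x : ℕ) : ℝ :=
  Real.exp (-l) * l ^ x / (Nat.factorial x : ℝ)

/-- Squared error risk, in the two-sample problem, of the estimator `δ` of
`S = U(X₁)λ₁ + U(X₂)λ₂` (with `U(x) = 1{x > A}`) when `X₁, X₂` are
independent Poisson with means `λ₁, λ₂`. -/
noncomputable def sqRisk2 (A l₁ l₂ : ℝ) (δ : ℕ × ℕ → ℝ) : ENNReal :=
  ∑' p : ℕ × ℕ,
    ENNReal.ofReal
      ((δ p - ((if A < (p.1 : ℝ) then (1 : ℝ) else 0) * l₁ +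
          (if A < (p.2 : ℝ) then (1 : ℝ) else 0) * l₂)) ^ 2 *
        (poissonPmf l₁ p.1 * poissonPmf l₂ p.2))

/-- Squared error risk of the estimator `δ` of `U(X₁)λ₁` with `U(x) = 1{x > A}`
and `X₁` Poisson with mean `λ₁`. -/
noncomputable def sqRisk1 (A l₁ : ℝ) (δ : ℕ → ℝ) : ENNReal :=
  ∑' x : ℕ,
    ENNReal.ofReal ((δ x - (if A < (x : ℝ) then (1 : ℝ) else 0) * l₁) ^ 2 * poissonPmf l₁ x)


/-!
Restricting the two-dimensional risk of `δ*` to the event `X₂ = 0` gives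
`e^{-λ₂} R₁(δ*(·, 0)) ≤ R₂(δ*)`, where `R₁ = sqRisk1` and `R₂ = sqRisk2`. On the other side,
the error `V(X₂) - U(X₂)λ₂` of the second coordinate vanishes at `X₂ = 0` (as `A ≥ 0`) and is
at most `X₂` in absolute value once `λ₂ ≤ 1`, so the bound `(a + b)² ≤ a²(1 + y) + y(1 + y)`
for `|b| ≤ y` together with the Poisson moments `E[1 + Y] = 1 + λ`, `E[Y(1 + Y)] = λ(2 + λ)`
gives `R₂(V + V) ≤ (1 + λ₂) R₁(V) + λ₂(2 + λ₂)`. Chaining these through the hypothesis and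
letting `λ₂ → 0` yields the claim; working in `ℝ≥0∞` spares all summability and finiteness
side conditions.
-/

open Filter Topology ENNReal

lemma poissonPmf_nonneg {l : ℝ} (hl : 0 ≤ l) (n : ℕ) : 0 ≤ poissonPmf l n := by
  unfold poissonPmf; positivity

lemma poissonPmf_zero (l : ℝ) : poissonPmf l 0 = Real.exp (-l) := by
  simp [poissonPmf]

lemma succ_mul_poissonPmf_succ (l : ℝ) (n : ℕ) :
    ((n : ℝ) + 1) * poissonPmf l (n + 1) = l * poissonPmf l n := by
  simp only [poissonPmf, Nat.factorial_succ, Nat.cast_mul, Nat.cast_succ, pow_succ]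
  field_simp

lemma tsum_ofReal_poissonPmf {l : ℝ} (hl : 0 ≤ l) :
    ∑' n, ENNReal.ofReal (poissonPmf l n) = 1 := by
  have h := ProbabilityTheory.hasSum_one_poissonMeasure l.toNNReal
  rw [Real.coe_toNNReal l hl] at h
  rw [← ENNReal.ofReal_tsum_of_nonneg (poissonPmf_nonneg hl) h.summable, ← ENNReal.ofReal_one]
  exact congrArg _ h.tsum_eq

/-- The Stein–Chen identity `E[Y g(Y)] = λ E[g(Y + 1)]` for `Y ~ Poisson(λ)`. -/
lemma tsum_ofReal_poissonPmf_mul_natCast_mul {l : ℝ} (hl : 0 ≤ l) (g : ℕ → ℝ≥0∞) :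
    ∑' n, ENNReal.ofReal (poissonPmf l n) * (n * g n) =
      ENNReal.ofReal l * ∑' n, ENNReal.ofReal (poissonPmf l n) * g (n + 1) := by
  rw [tsum_eq_zero_add' ENNReal.summable, ← ENNReal.tsum_mul_left]
  simp only [Nat.cast_zero, zero_mul, mul_zero, zero_add]
  refine tsum_congr fun n => ?_
  rw [← mul_assoc, ← mul_assoc, ← ENNReal.ofReal_mul hl, ← succ_mul_poissonPmf_succ,
    ENNReal.ofReal_mul (by positivity), mul_comm (ENNReal.ofReal _)]
  push_cast
  rw [ENNReal.ofReal_add (by positivity) zero_le_one]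
  simp [mul_assoc]

lemma tsum_ofReal_poissonPmf_mul_one_add {l : ℝ} (hl : 0 ≤ l) :
    ∑' n, ENNReal.ofReal (poissonPmf l n) * (1 + n) = 1 + ENNReal.ofReal l := by
  have h := tsum_ofReal_poissonPmf_mul_natCast_mul hl 1
  simp only [Pi.one_apply, mul_one] at h
  simp_rw [mul_add, mul_one, ENNReal.tsum_add, h, tsum_ofReal_poissonPmf hl, mul_one]

lemma tsum_ofReal_poissonPmf_mul_natCast_mul_one_add {l : ℝ} (hl : 0 ≤ l) :
    ∑' n, ENNReal.ofReal (poissonPmf l n) * (n * (1 + n)) =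
      ENNReal.ofReal l * (2 + ENNReal.ofReal l) := by
  rw [tsum_ofReal_poissonPmf_mul_natCast_mul hl (fun n => 1 + n)]
  have h (n : ℕ) : ENNReal.ofReal (poissonPmf l n) * (1 + ((n + 1 : ℕ) : ℝ≥0∞)) =
      ENNReal.ofReal (poissonPmf l n) + ENNReal.ofReal (poissonPmf l n) * (1 + n) := by
    push_cast; ring
  simp_rw [h, ENNReal.tsum_add, tsum_ofReal_poissonPmf hl, tsum_ofReal_poissonPmf_mul_one_add hl]
  ring

lemma sq_add_le_of_abs_le {a b y : ℝ} (hb : |b| ≤ y) :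
    (a + b) ^ 2 ≤ a ^ 2 * (1 + y) + y * (1 + y) := by
  have hy : 0 ≤ y := (abs_nonneg b).trans hb
  have hab : a * b ≤ |a| * y :=
    (le_abs_self _).trans ((abs_mul a b).trans_le (mul_le_mul_of_nonneg_left hb (abs_nonneg a)))
  have hbb : b ^ 2 ≤ y ^ 2 := by rw [← sq_abs]; exact pow_le_pow_left₀ (abs_nonneg b) hb 2
  nlinarith [sq_abs a, mul_nonneg hy (sq_nonneg (|a| - 1))]

lemma abs_sub_ite_mul_le {A l : ℝ} (hA : 0 ≤ A) (hl₀ : 0 ≤ l) (hl₁ : l ≤ 1) {v : ℝ} {y : ℕ}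
    (hv : 0 ≤ v ∧ v ≤ y) : |v - (if A < (y : ℝ) then 1 else 0) * l| ≤ y := by
  split_ifs with hy
  · have hy_pos : y ≠ 0 := by rintro rfl; rw [Nat.cast_zero] at hy; linarith
    have hy_one : (1 : ℝ) ≤ y := Nat.one_le_cast.mpr (Nat.one_le_iff_ne_zero.mpr hy_pos)
    rw [abs_le]; constructor <;> linarith
  · rw [zero_mul, sub_zero, abs_of_nonneg hv.1]; exact hv.2

lemma ofReal_sq_add_mul_le {a b y p q : ℝ} (hp : 0 ≤ p) (hq : 0 ≤ q) (hb : |b| ≤ y) :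
    ENNReal.ofReal ((a + b) ^ 2 * (p * q)) ≤
      ENNReal.ofReal (a ^ 2 * p) * (ENNReal.ofReal q * (1 + ENNReal.ofReal y)) +
        ENNReal.ofReal p * (ENNReal.ofReal q * (ENNReal.ofReal y * (1 + ENNReal.ofReal y))) := by
  have hy : 0 ≤ y := (abs_nonneg b).trans hb
  rw [← ENNReal.ofReal_one, ← ENNReal.ofReal_add zero_le_one hy, ← ENNReal.ofReal_mul hy,
    ← ENNReal.ofReal_mul hq, ← ENNReal.ofReal_mul hq, ← ENNReal.ofReal_mul (by positivity),
    ← ENNReal.ofReal_mul hp, ← ENNReal.ofReal_add (by positivity) (by positivity)]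
  refine ENNReal.ofReal_le_ofReal ?_
  calc (a + b) ^ 2 * (p * q) ≤ (a ^ 2 * (1 + y) + y * (1 + y)) * (p * q) :=
        mul_le_mul_of_nonneg_right (sq_add_le_of_abs_le hb) (by positivity)
    _ = _ := by ring

lemma exp_neg_mul_sqRisk1_le_sqRisk2 {A : ℝ} (hA : 0 ≤ A) (l₁ l₂ : ℝ) (δ : ℕ × ℕ → ℝ) :
    ENNReal.ofReal (Real.exp (-l₂)) * sqRisk1 A l₁ (fun x => δ (x, 0)) ≤ sqRisk2 A l₁ l₂ δ := by
  rw [sqRisk1, ← ENNReal.tsum_mul_left]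
  refine le_of_eq_of_le (tsum_congr fun x => ?_)
    (ENNReal.tsum_comp_le_tsum_of_injective (f := fun x : ℕ => (x, 0))
      (fun _ _ h => (Prod.mk.inj h).1) _)
  rw [← ENNReal.ofReal_mul (Real.exp_pos _).le, poissonPmf_zero]
  simp only [ite_mul, one_mul, zero_mul, Nat.cast_zero, not_lt.mpr hA, ↓reduceIte, add_zero]
  ring_nf

lemma sqRisk2_add_le {A l₁ l₂ : ℝ} (hA : 0 ≤ A) (hl₁ : 0 ≤ l₁) (hl₂ : 0 ≤ l₂) (hl₂' : l₂ ≤ 1)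
    {V : ℕ → ℝ} (hV : ∀ x, 0 ≤ V x ∧ V x ≤ x) :
    sqRisk2 A l₁ l₂ (fun p => V p.1 + V p.2) ≤
      sqRisk1 A l₁ V * (1 + ENNReal.ofReal l₂) + ENNReal.ofReal l₂ * (2 + ENNReal.ofReal l₂) := by
  calc sqRisk2 A l₁ l₂ (fun p => V p.1 + V p.2)
      ≤ ∑' (x) (y),
          (ENNReal.ofReal ((V x - (if A < (x : ℝ) then 1 else 0) * l₁) ^ 2 * poissonPmf l₁ x) *
              (ENNReal.ofReal (poissonPmf l₂ y) * (1 + y)) +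
            ENNReal.ofReal (poissonPmf l₁ x) *
              (ENNReal.ofReal (poissonPmf l₂ y) * (y * (1 + y)))) := by
        rw [sqRisk2, ENNReal.tsum_prod']
        refine ENNReal.tsum_le_tsum fun x => ENNReal.tsum_le_tsum fun y => ?_
        have h := ofReal_sq_add_mul_le (poissonPmf_nonneg hl₁ x) (poissonPmf_nonneg hl₂ y)
          (a := V x - (if A < (x : ℝ) then 1 else 0) * l₁)
          (abs_sub_ite_mul_le hA hl₂ hl₂' (hV y))
        rw [ENNReal.ofReal_natCast] at h
        convert h using 3
        ring
    _ = sqRisk1 A l₁ V * (1 + ENNReal.ofReal l₂) + ENNReal.ofReal l₂ * (2 + ENNReal.ofReal l₂) := by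
        simp_rw [ENNReal.tsum_add, ENNReal.tsum_mul_left, ENNReal.tsum_mul_right,
          tsum_ofReal_poissonPmf_mul_one_add hl₂, tsum_ofReal_poissonPmf hl₁,
          tsum_ofReal_poissonPmf_mul_natCast_mul_one_add hl₂, one_mul]
        rfl

lemma ENNReal.le_of_forall_exp_neg_mul_le {a b : ℝ≥0∞}
    (h : ∀ t ∈ Set.Ioc (0 : ℝ) 1, ENNReal.ofReal (Real.exp (-t)) * a ≤
      b * (1 + ENNReal.ofReal t) + ENNReal.ofReal t * (2 + ENNReal.ofReal t)) :
    a ≤ b := by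
  have hofReal : Tendsto (fun t => ENNReal.ofReal t) (𝓝[>] 0) (𝓝 0) := by
    simpa using (ENNReal.continuous_ofReal.tendsto 0).mono_left nhdsWithin_le_nhds
  have hexp : Tendsto (fun t => ENNReal.ofReal (Real.exp (-t))) (𝓝[>] 0) (𝓝 1) := by
    have := (ENNReal.continuous_ofReal.comp (Real.continuous_exp.comp continuous_neg)).tendsto 0
    simpa [Function.comp_def] using this.mono_left nhdsWithin_le_nhds
  have hone_add : Tendsto (fun t => 1 + ENNReal.ofReal t) (𝓝[>] 0) (𝓝 1) := by
    simpa using tendsto_const_nhds.add hofReal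
  have htwo_add : Tendsto (fun t => 2 + ENNReal.ofReal t) (𝓝[>] 0) (𝓝 2) := by
    simpa using tendsto_const_nhds.add hofReal
  have hlower : Tendsto (fun t => ENNReal.ofReal (Real.exp (-t)) * a) (𝓝[>] 0) (𝓝 a) := by
    simpa using ENNReal.Tendsto.mul_const hexp (.inl one_ne_zero)
  have hupper : Tendsto (fun t => b * (1 + ENNReal.ofReal t) +
      ENNReal.ofReal t * (2 + ENNReal.ofReal t)) (𝓝[>] 0) (𝓝 b) := by
    simpa using (ENNReal.Tendsto.const_mul hone_add (.inl one_ne_zero)).add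
      (ENNReal.Tendsto.mul hofReal (.inr ofNat_ne_top) htwo_add (.inl two_ne_zero))
  exact le_of_tendsto_of_tendsto hlower hupper
    (eventually_of_mem (Ioc_mem_nhdsGT zero_lt_one) h)

/-- Step in the proof of Theorem 3.1 (`n = 2`): if `δ*` dominates
`V(X₁) + V(X₂)` (with `V(x) = x·1{x ≥ ⌊A⌋ + 2}`) in two-dimensional risk for
all `λ₁, λ₂ > 0`, then letting `λ₂ → 0` yields, for every `λ₁ > 0`, the
one-dimensional risk inequality for `δ*(·, 0)` against `V`. -/
theorem poisson_two_dim_to_one_dim (A : ℝ) (hA : 0 ≤ A)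
    (V : ℕ → ℝ) (hV : ∀ x, V x = if Nat.floor A + 2 ≤ x then (x : ℝ) else 0)
    (δstar : ℕ × ℕ → ℝ)
    (hdom : ∀ l₁ l₂ : ℝ, 0 < l₁ → 0 < l₂ →
      sqRisk2 A l₁ l₂ δstar ≤ sqRisk2 A l₁ l₂ (fun p => V p.1 + V p.2)) :
    ∀ l₁ : ℝ, 0 < l₁ →
      sqRisk1 A l₁ (fun x => δstar (x, 0)) ≤ sqRisk1 A l₁ V := by
  intro l₁ hl₁
  have hV_bounds (x : ℕ) : 0 ≤ V x ∧ V x ≤ x := by rw [hV]; split_ifs <;> simp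
  refine ENNReal.le_of_forall_exp_neg_mul_le fun l₂ hl₂ => ?_
  calc ENNReal.ofReal (Real.exp (-l₂)) * sqRisk1 A l₁ (fun x => δstar (x, 0))
      ≤ sqRisk2 A l₁ l₂ δstar := exp_neg_mul_sqRisk1_le_sqRisk2 hA l₁ l₂ δstar
    _ ≤ sqRisk2 A l₁ l₂ (fun p => V p.1 + V p.2) := hdom l₁ l₂ hl₁ hl₂.1
    _ ≤ _ := sqRisk2_add_le hA hl₁.le hl₂.1.le hl₂.2 hV_bounds
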